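/- Fix 0 < α ≤ 2 and t > 0. If g : (0,t) → ℂ is measurable with ∫_0^t |g(τ)| τ^α dτ < ∞, then the function z ↦ (L_t^α g)(z) := t^{-α} ∫_0^t K_α(z,t-τ) g(τ) τ^α dτ is holomorphic on the open sector Δ_α. -/

import Mathlib

open MeasureTheory Filter Set Complex

/-- The open sector `Δ_α = {z ≠ 0 : |arg z| < πα/4}`. -/
def sector (α : ℝ) : Set ℂ :=
  {z : ℂ | z ≠ 0 ∧ |Complex.arg z| < Real.pi * α / 4}

/-- The complex kernel `K_α(z,s) = (α^α/(2^α Γ(α/2))) z s^{-(α/2+1)} exp(-α² z^{2/α}/(4s))`,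
where `z^{2/α}` is taken with the principal branch. -/
noncomputable def Kc (α : ℝ) (z : ℂ) (s : ℝ) : ℂ :=
  ((α ^ α / (2 ^ α * Real.Gamma (α / 2)) : ℝ) : ℂ) * z * (((s ^ (-(α / 2 + 1)) : ℝ)) : ℂ) *
    Complex.exp (-(α ^ 2 : ℂ) * z ^ (((2 / α : ℝ)) : ℂ) / (4 * (s : ℂ)))

/-- The transform `(L_t^α g)(z) = t^{-α} ∫_0^t K_α(z,t-τ) g(τ) τ^α dτ`. -/
noncomputable def Lc (α t : ℝ) (g : ℝ → ℂ) (z : ℂ) : ℂ :=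
  ((t ^ (-α) : ℝ) : ℂ) *
    ∫ τ in Set.Ioo (0 : ℝ) t, Kc α z (t - τ) * g τ * ((τ ^ α : ℝ) : ℂ)

/-! The kernel `K_α(·, s)` is holomorphic on `Δ_α`, which lies in the slit plane, and near each
point of the sector it is bounded uniformly in `s ∈ (0, t]`: on a small ball `Re z^{2/α} ≥ m > 0`,
so `|K_α(z, s)| ≲ s^{-(α/2+1)} e^{-α² m / (4s)}`, which stays bounded as `s → 0`. The integrand is
therefore dominated by `C |g(τ)| τ^α` on that ball; Cauchy's estimate bounds its `z`-derivative on
the half ball by the same function, and we differentiate under the integral sign. -/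

open Metric Topology

section ParametricHolomorphy

variable {X E : Type*} [MeasurableSpace X] {μ : Measure X} [NormedAddCommGroup E]
  [NormedSpace ℂ E]

theorem aestronglyMeasurable_deriv_of_ae_differentiableAt {F : ℂ → X → E} {z₀ : ℂ}
    (hF_meas : ∀ z, AEStronglyMeasurable (F z) μ)
    (h_diff : ∀ᵐ x ∂μ, DifferentiableAt ℂ (F · x) z₀) :
    AEStronglyMeasurable (fun x => deriv (F · x) z₀) μ :=
  aestronglyMeasurable_of_tendsto_ae (𝓝[≠] z₀)
    (fun z => ((hF_meas z).sub (hF_meas z₀)).const_smul (z - z₀)⁻¹)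
    (h_diff.mono fun _ hx => hasDerivAt_iff_tendsto_slope.mp hx.hasDerivAt)

theorem norm_deriv_le_of_forall_mem_ball_norm_le {f : ℂ → E} {z₀ z : ℂ} {ε C : ℝ}
    (hf : DifferentiableOn ℂ f (ball z₀ ε)) (hC : ∀ w ∈ ball z₀ ε, ‖f w‖ ≤ C)
    (hz : z ∈ ball z₀ (ε / 2)) : ‖deriv f z‖ ≤ C / (ε / 2) := by
  have hε : 0 < ε / 2 := pos_of_mem_ball hz
  have hsub : closedBall z (ε / 2) ⊆ ball z₀ ε := fun w hw => by
    rw [mem_closedBall] at hw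
    rw [mem_ball] at hz ⊢
    linarith [dist_triangle w z z₀]
  exact norm_deriv_le_of_forall_mem_sphere_norm_le hε (hf.diffContOnCl_ball hsub)
    fun w hw => hC w (hsub (sphere_subset_closedBall hw))

theorem differentiableAt_integral_of_forall_mem_ball_norm_le [CompleteSpace E]
    {F : ℂ → X → E} {bound : X → ℝ} {z₀ : ℂ} {ε : ℝ} (hε : 0 < ε)
    (hF_meas : ∀ z, AEStronglyMeasurable (F z) μ)
    (h_diff : ∀ᵐ x ∂μ, DifferentiableOn ℂ (F · x) (ball z₀ ε))
    (h_bound : ∀ᵐ x ∂μ, ∀ z ∈ ball z₀ ε, ‖F z x‖ ≤ bound x)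
    (bound_integrable : Integrable bound μ) :
    DifferentiableAt ℂ (fun z => ∫ x, F z x ∂μ) z₀ := by
  have hdiffAt : ∀ᵐ x ∂μ, ∀ z ∈ ball z₀ (ε / 2), DifferentiableAt ℂ (F · x) z := by
    filter_upwards [h_diff] with x hx z hz
    exact hx.differentiableAt (isOpen_ball.mem_nhds (ball_subset_ball (by linarith) hz))
  have hF_int : Integrable (F z₀) μ :=
    bound_integrable.mono' (hF_meas z₀) (h_bound.mono fun _ hx => hx z₀ (mem_ball_self hε))
  refine (hasDerivAt_integral_of_dominated_loc_of_deriv_le (ball_mem_nhds z₀ (half_pos hε))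
    (.of_forall hF_meas) hF_int (F' := fun z x => deriv (F · x) z)
    (aestronglyMeasurable_deriv_of_ae_differentiableAt hF_meas
      (hdiffAt.mono fun _ hx => hx z₀ (mem_ball_self (half_pos hε))))
    ?_ (bound_integrable.div_const (ε / 2)) ?_).2.differentiableAt
  · filter_upwards [h_diff, h_bound] with x hdx hbx z hz
    exact norm_deriv_le_of_forall_mem_ball_norm_le hdx hbx hz
  · filter_upwards [hdiffAt] with x hx z hz
    exact (hx z hz).hasDerivAt

end ParametricHolomorphy

theorem exists_rpow_neg_mul_exp_neg_div_le (p : ℝ) {c : ℝ} (hc : 0 < c) (t : ℝ) :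
    ∃ B, ∀ s ∈ Ioc 0 t, s ^ (-p) * Real.exp (-(c / s)) ≤ B := by
  obtain ⟨n, hn⟩ := exists_nat_ge p
  refine ⟨n.factorial / c ^ n * t ^ ((n : ℝ) - p), fun s ⟨hs, hst⟩ => ?_⟩
  have hexp : Real.exp (-(c / s)) ≤ n.factorial / c ^ n * s ^ n :=
    calc Real.exp (-(c / s)) = (Real.exp (c / s))⁻¹ := Real.exp_neg _
      _ ≤ ((c / s) ^ n / n.factorial)⁻¹ :=
          inv_anti₀ (by positivity) (Real.pow_div_factorial_le_exp _ (by positivity) n)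
      _ = n.factorial / c ^ n * s ^ n := by rw [div_pow, inv_div]; field_simp
  calc s ^ (-p) * Real.exp (-(c / s))
      ≤ s ^ (-p) * (n.factorial / c ^ n * s ^ n) := by gcongr
    _ = n.factorial / c ^ n * s ^ ((n : ℝ) - p) := by
        rw [← Real.rpow_natCast s n, mul_left_comm, ← Real.rpow_add hs]; ring_nf
    _ ≤ n.factorial / c ^ n * t ^ ((n : ℝ) - p) := by gcongr

theorem sector_subset_slitPlane {α : ℝ} (hα4 : α ≤ 4) : sector α ⊆ slitPlane := by
  rintro z ⟨hz0, harg⟩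
  refine mem_slitPlane_iff_arg.mpr ⟨fun h => ?_, hz0⟩
  rw [h, abs_of_pos Real.pi_pos] at harg
  nlinarith [Real.pi_pos]

theorem isOpen_sector {α : ℝ} (hα4 : α ≤ 4) : IsOpen (sector α) := by
  have h : sector α = slitPlane ∩ (fun z => |arg z|) ⁻¹' Iio (Real.pi * α / 4) :=
    Set.ext fun z => ⟨fun hz => ⟨sector_subset_slitPlane hα4 hz, hz.2⟩,
      fun hz => ⟨slitPlane_ne_zero hz.1, hz.2⟩⟩
  rw [h]
  exact continuousOn_arg.abs.isOpen_inter_preimage isOpen_slitPlane isOpen_Iio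

theorem re_cpow_pos_of_mem_sector {α : ℝ} (hα : 0 < α) {z : ℂ} (hz : z ∈ sector α) :
    0 < (z ^ ((2 / α : ℝ) : ℂ)).re := by
  obtain ⟨hz0, harg⟩ := hz
  rw [cpow_ofReal_re]
  refine mul_pos (Real.rpow_pos_of_pos (norm_pos_iff.mpr hz0) _) (Real.cos_pos_of_mem_Ioo ?_)
  have h : |arg z * (2 / α)| < Real.pi / 2 := by
    rw [abs_mul, abs_of_pos (by positivity : 0 < 2 / α)]
    calc |arg z| * (2 / α) < Real.pi * α / 4 * (2 / α) := by gcongr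
      _ = Real.pi / 2 := by field_simp; ring
  exact abs_lt.mp h

theorem measurable_Kc (α : ℝ) (z : ℂ) : Measurable (Kc α z) := by
  unfold Kc
  fun_prop

theorem differentiableAt_Kc (α s : ℝ) {z : ℂ} (hz : z ∈ slitPlane) :
    DifferentiableAt ℂ (fun z => Kc α z s) z := by
  unfold Kc
  fun_prop (disch := exact hz)

theorem norm_Kc (α : ℝ) (z : ℂ) {s : ℝ} (hs : 0 < s) :
    ‖Kc α z s‖ = |α ^ α / (2 ^ α * Real.Gamma (α / 2))| * ‖z‖ *
      (s ^ (-(α / 2 + 1)) * Real.exp (-(α ^ 2 * (z ^ ((2 / α : ℝ) : ℂ)).re / 4 / s))) := by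
  have hexp : -(α ^ 2 : ℂ) * z ^ ((2 / α : ℝ) : ℂ) / (4 * (s : ℂ)) =
      ((-(α ^ 2) / (4 * s) : ℝ) : ℂ) * z ^ ((2 / α : ℝ) : ℂ) := by
    push_cast; ring
  rw [Kc, hexp, norm_mul, norm_mul, norm_mul, norm_exp, re_ofReal_mul, norm_real, norm_real,
    Real.norm_eq_abs, Real.norm_eq_abs, abs_of_pos (Real.rpow_pos_of_pos hs _)]
  ring_nf

theorem exists_norm_Kc_le {α : ℝ} (hα : α ≠ 0) {m : ℝ} (hm : 0 < m) (R t : ℝ) :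
    ∃ C, ∀ z : ℂ, m ≤ (z ^ ((2 / α : ℝ) : ℂ)).re → ‖z‖ ≤ R →
      ∀ s ∈ Ioc 0 t, ‖Kc α z s‖ ≤ C := by
  obtain ⟨B, hB⟩ := exists_rpow_neg_mul_exp_neg_div_le (α / 2 + 1)
    (by positivity : 0 < α ^ 2 * m / 4) t
  refine ⟨|α ^ α / (2 ^ α * Real.Gamma (α / 2))| * R * B, fun z hmz hR s hs => ?_⟩
  have hs0 : 0 < s := hs.1
  have hR0 : 0 ≤ R := (norm_nonneg z).trans hR
  rw [norm_Kc α z hs0]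
  have hexp : Real.exp (-(α ^ 2 * (z ^ ((2 / α : ℝ) : ℂ)).re / 4 / s)) ≤
      Real.exp (-(α ^ 2 * m / 4 / s)) := by
    gcongr
  calc _ ≤ |α ^ α / (2 ^ α * Real.Gamma (α / 2))| * R *
        (s ^ (-(α / 2 + 1)) * Real.exp (-(α ^ 2 * m / 4 / s))) := by gcongr
    _ ≤ _ := by gcongr; exact hB s hs

theorem exists_ball_norm_Kc_le {α : ℝ} (hα : 0 < α) (hα4 : α ≤ 4) {z₀ : ℂ}
    (hz₀ : z₀ ∈ sector α) (t : ℝ) :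
    ∃ ε > 0, ball z₀ ε ⊆ sector α ∧ ∃ C, ∀ z ∈ ball z₀ ε, ∀ s ∈ Ioc 0 t, ‖Kc α z s‖ ≤ C := by
  set m := (z₀ ^ ((2 / α : ℝ) : ℂ)).re / 2
  have hm : 0 < m := half_pos (re_cpow_pos_of_mem_sector hα hz₀)
  have hre : ContinuousAt (fun z : ℂ => (z ^ ((2 / α : ℝ) : ℂ)).re) z₀ :=
    continuous_re.continuousAt.comp (continuousAt_cpow_const (sector_subset_slitPlane hα4 hz₀))
  have hnear : ∀ᶠ z in 𝓝 z₀,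
      z ∈ sector α ∧ m ≤ (z ^ ((2 / α : ℝ) : ℂ)).re ∧ ‖z‖ ≤ ‖z₀‖ + 1 :=
    ((isOpen_sector hα4).eventually_mem hz₀).and <|
      (hre.eventually (le_mem_nhds (half_lt_self (re_cpow_pos_of_mem_sector hα hz₀)))).and
        (continuous_norm.continuousAt.eventually (ge_mem_nhds (lt_add_one _)))
  obtain ⟨ε, hε, hball⟩ := eventually_nhds_iff_ball.mp hnear
  obtain ⟨C, hC⟩ := exists_norm_Kc_le hα.ne' hm (‖z₀‖ + 1) t
  exact ⟨ε, hε, fun z hz => (hball z hz).1, C, fun z hz => hC z (hball z hz).2.1 (hball z hz).2.2⟩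

theorem stmt11_general (α t : ℝ) (hα : 0 < α) (hα2 : α ≤ 2)
    (g : ℝ → ℂ) (hg : Measurable g)
    (hint : IntegrableOn (fun τ => ‖g τ‖ * τ ^ α) (Set.Ioo 0 t)) :
    DifferentiableOn ℂ (Lc α t g) (sector α) := by
  intro z₀ hz₀
  obtain ⟨ε, hε, hball, C, hC⟩ := exists_ball_norm_Kc_le hα (by linarith) hz₀ t
  refine (DifferentiableAt.const_mul ?_ _).differentiableWithinAt
  have hmeas (z : ℂ) : Measurable fun τ => Kc α z (t - τ) * g τ * ((τ ^ α : ℝ) : ℂ) :=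
    (((measurable_Kc α z).comp (measurable_const.sub measurable_id)).mul hg).mul (by fun_prop)
  have hdiff (τ : ℝ) (z : ℂ) (hz : z ∈ ball z₀ ε) :
      DifferentiableAt ℂ (fun z => Kc α z (t - τ) * g τ * ((τ ^ α : ℝ) : ℂ)) z :=
    ((differentiableAt_Kc α (t - τ) (sector_subset_slitPlane (by linarith) (hball hz))).mul_const
      _).mul_const _
  refine differentiableAt_integral_of_forall_mem_ball_norm_le hε
    (fun z => (hmeas z).aestronglyMeasurable)
    (.of_forall fun τ z hz => (hdiff τ z hz).differentiableWithinAt) ?_ (hint.const_mul C)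
  rw [ae_restrict_iff' measurableSet_Ioo]
  refine .of_forall fun τ ⟨hτ0, hτt⟩ z hz => ?_
  rw [norm_mul, norm_mul, norm_real, Real.norm_eq_abs, abs_of_nonneg (by positivity), mul_assoc]
  exact mul_le_mul_of_nonneg_right (hC z hz _ ⟨by linarith, by linarith⟩) (by positivity)

theorem stmt11 (α t : ℝ) (hα : 0 < α) (hα2 : α ≤ 2) (ht : 0 < t)
    (g : ℝ → ℂ) (hg : Measurable g)
    (hint : IntegrableOn (fun τ => ‖g τ‖ * τ ^ α) (Set.Ioo 0 t)) :
    DifferentiableOn ℂ (Lc α t g) (sector α) :=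
  stmt11_general α t hα hα2 g hg hint
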